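/- Let x ∈ ℝⁿ with card(x) = k, and suppose that x̃_i ∉ (0, √g_i) for every i (with √(+∞) = +∞, so this forces x̃_i = 0 whenever g_i = +∞). Then f**(x) = f(x) = Σ_{i=1}^k (g_i + x̃_i²); in particular the convex envelope is tight at x. -/

import Mathlib

open scoped RealInnerProductSpace ENNReal
noncomputable section

/-- `ℝⁿ` with the Euclidean inner product and norm. -/
abbrev Evec (n : ℕ) := EuclideanSpace ℝ (Fin n)

/-- The number of nonzero entries of a vector. -/
def spcard {n : ℕ} (x : Evec n) : ℕ := (Finset.univ.filter (fun i => x i ≠ 0)).card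

/-- The absolute values of the entries of `x` sorted in nonincreasing order,
as a `1`-based function on `ℕ` (with value `0` outside `{1,…,n}`, so the
convention `x̃_{n+1} = 0` is built in). -/
def sortedAbs {n : ℕ} (x : Evec n) : ℕ → ℝ :=
  fun j => if h : 1 ≤ j ∧ j ≤ n then
    |x ((Tuple.sort (fun i : Fin n => -|x i|)) ⟨j - 1, by omega⟩)| else 0

/-- `G(k) = ∑_{i=1}^k g_i`. -/
def Gsum (g : ℕ → ℝ≥0∞) (k : ℕ) : ℝ≥0∞ := ∑ i ∈ Finset.Icc 1 k, g i

/-- `f(x) = G(card x) + ‖x‖²`, valued in `EReal`. -/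
def fobj {n : ℕ} (g : ℕ → ℝ≥0∞) (x : Evec n) : EReal :=
  ((Gsum g (spcard x) : ℝ≥0∞) : EReal) + ((‖x‖ ^ 2 : ℝ) : EReal)

/-- The convex conjugate `f*` of `f`. -/
def fconj {n : ℕ} (g : ℕ → ℝ≥0∞) (y : Evec n) : EReal :=
  ⨆ x : Evec n, ((⟪x, y⟫ : ℝ) : EReal) - fobj g x

/-- The biconjugate (convex envelope) `f**` of `f`. -/
def fbiconj {n : ℕ} (g : ℕ → ℝ≥0∞) (x : Evec n) : EReal :=
  ⨆ y : Evec n, ((⟪x, y⟫ : ℝ) : EReal) - fconj g y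

/-- `v` is a subgradient of `f**` at `x`. -/
def IsSubgrad {n : ℕ} (g : ℕ → ℝ≥0∞) (v x : Evec n) : Prop :=
  ∀ w : Evec n, fbiconj g x + ((⟪v, w - x⟫ : ℝ) : EReal) ≤ fbiconj g w

/-- `z = (I − AᵀA)x + Aᵀb`. -/
def zvec {n m : ℕ} (A : Evec n →L[ℝ] Evec m) (b : Evec m) (x : Evec n) : Evec n :=
  x - ContinuousLinearMap.adjoint A (A x) + ContinuousLinearMap.adjoint A b

/-- `x` is a stationary point of the relaxation `R_g(·) + ‖A·−b‖²`:
`2z` is a subgradient of `f**` at `x`, where `z = (I − AᵀA)x + Aᵀb`. -/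
def IsStationaryRelax {n m : ℕ} (g : ℕ → ℝ≥0∞) (A : Evec n →L[ℝ] Evec m) (b : Evec m)
    (x : Evec n) : Prop :=
  IsSubgrad g ((2 : ℝ) • zvec A b x) x

/-- `A` satisfies the RIP of order `r` with constant `δ`. -/
def RIP {n m : ℕ} (A : Evec n →L[ℝ] Evec m) (r : ℕ) (δ : ℝ) : Prop :=
  ∀ w : Evec n, spcard w ≤ r →
    (1 - δ) * ‖w‖ ^ 2 ≤ ‖A w‖ ^ 2 ∧ ‖A w‖ ^ 2 ≤ (1 + δ) * ‖w‖ ^ 2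

/-- Square root on `[0,∞]`, with `√(+∞) = +∞`. -/
def sqrtE (a : ℝ≥0∞) : ℝ≥0∞ := a ^ (1 / 2 : ℝ)

/-- The relaxed objective `R_g(x) + ‖Ax − b‖²`, where `R_g(x) = f**(x) − ‖x‖²`. -/
def relaxObj {n m : ℕ} (g : ℕ → ℝ≥0∞) (A : Evec n →L[ℝ] Evec m) (b : Evec m)
    (x : Evec n) : EReal :=
  (fbiconj g x - ((‖x‖ ^ 2 : ℝ) : EReal)) + ((‖A x - b‖ ^ 2 : ℝ) : EReal)

/-- The original (unrelaxed) objective `G(card(x)) + ‖Ax − b‖²`. -/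
def origObj {n m : ℕ} (g : ℕ → ℝ≥0∞) (A : Evec n →L[ℝ] Evec m) (b : Evec m)
    (x : Evec n) : EReal :=
  ((Gsum g (spcard x) : ℝ≥0∞) : EReal) + ((‖A x - b‖ ^ 2 : ℝ) : EReal)

/-- `x` is a local minimizer of `F`. -/
def IsLocalMinimizer {n : ℕ} (F : Evec n → EReal) (x : Evec n) : Prop :=
  ∃ U ∈ nhds x, ∀ w ∈ U, F x ≤ F w

/-! The vector `2x` supports `f` at `x`: for every `w`, `f(w) ≥ f(x) + ⟪w - x, 2x⟫`, which
after expanding the squares says `G(k) ≤ G(card w) + ‖w - x‖²`. A function with an affine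
minorant that touches it at `x` agrees with its biconjugate there. For the inequality, with
`m = card w`, the hypothesis gives `g_i ≤ x̃_i²` for `i ≤ k`, so
`G(k) - G(m) ≤ ∑_{m < i ≤ k} x̃_i²`. This is at most the mass of `x` outside its `m` largest
entries, hence at most the mass of `x` off the support of `w`, which is at most `‖w - x‖²`. -/

open Finset

section Conjugate

variable {E : Type*} [NormedAddCommGroup E] [InnerProductSpace ℝ E]

def fenchelConjugate (F : E → EReal) (y : E) : EReal :=
  ⨆ x, ((⟪x, y⟫ : ℝ) : EReal) - F x

lemma inner_sub_le_fenchelConjugate (F : E → EReal) (x y : E) :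
    ((⟪x, y⟫ : ℝ) : EReal) - F x ≤ fenchelConjugate F y :=
  le_iSup (fun w => ((⟪w, y⟫ : ℝ) : EReal) - F w) x

lemma EReal.coe_sub_coe_sub_le (a : ℝ) (c : EReal) : (a : EReal) - (a - c) ≤ c := by
  induction c using EReal.rec with
  | bot => simp
  | coe c => rw [← EReal.coe_sub, ← EReal.coe_sub, sub_sub_cancel]
  | top => exact le_top

lemma fenchelConjugate_fenchelConjugate_le (F : E → EReal) (x : E) :
    fenchelConjugate (fenchelConjugate F) x ≤ F x :=
  iSup_le fun y => by
    rw [real_inner_comm]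
    exact (EReal.sub_le_sub le_rfl (inner_sub_le_fenchelConjugate F x y)).trans
      (EReal.coe_sub_coe_sub_le _ _)

lemma fenchelConjugate_fenchelConjugate_eq_of_affine_minorant {F : E → EReal} {x y : E} {c : ℝ}
    (hx : F x = c) (hmin : ∀ w, ((c + ⟪w - x, y⟫ : ℝ) : EReal) ≤ F w) :
    fenchelConjugate (fenchelConjugate F) x = F x := by
  have hconj : fenchelConjugate F y ≤ ((⟪x, y⟫ - c : ℝ) : EReal) := iSup_le fun w =>
    calc ((⟪w, y⟫ : ℝ) : EReal) - F w
        ≤ ((⟪w, y⟫ : ℝ) : EReal) - ((c + ⟪w - x, y⟫ : ℝ) : EReal) :=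
          EReal.sub_le_sub le_rfl (hmin w)
      _ = ((⟪x, y⟫ - c : ℝ) : EReal) := by
          rw [← EReal.coe_sub, inner_sub_left]; congr 1; ring
  refine (fenchelConjugate_fenchelConjugate_le F x).antisymm ?_
  calc F x = ((⟪x, y⟫ : ℝ) : EReal) - ((⟪x, y⟫ - c : ℝ) : EReal) := by
        rw [hx, ← EReal.coe_sub, sub_sub_cancel]
    _ ≤ ((⟪x, y⟫ : ℝ) : EReal) - fenchelConjugate F y := EReal.sub_le_sub le_rfl hconj
    _ ≤ fenchelConjugate (fenchelConjugate F) x := by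
        rw [real_inner_comm]; exact inner_sub_le_fenchelConjugate _ y x

end Conjugate

lemma fbiconj_eq_fenchelConjugate_fenchelConjugate {n : ℕ} (g : ℕ → ℝ≥0∞) (x : Evec n) :
    fbiconj g x = fenchelConjugate (fenchelConjugate (fobj g)) x := by
  simp only [fbiconj, fconj, fenchelConjugate, real_inner_comm x]

lemma EReal.coe_finset_sum {ι : Type*} (s : Finset ι) (f : ι → ℝ) :
    ((∑ i ∈ s, f i : ℝ) : EReal) = ∑ i ∈ s, (f i : EReal) :=
  map_sum (⟨⟨(↑), EReal.coe_zero⟩, EReal.coe_add⟩ : ℝ →+ EReal) f s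

lemma EReal.coe_ennreal_finset_sum {ι : Type*} (s : Finset ι) (f : ι → ℝ≥0∞) :
    ((∑ i ∈ s, f i : ℝ≥0∞) : EReal) = ∑ i ∈ s, (f i : EReal) :=
  map_sum (⟨⟨(↑), EReal.coe_ennreal_zero⟩, EReal.coe_ennreal_add⟩ : ℝ≥0∞ →+ EReal) f s

lemma sq_sqrtE (a : ℝ≥0∞) : sqrtE a ^ 2 = a := by
  rw [sqrtE, ← ENNReal.rpow_natCast, ← ENNReal.rpow_mul]
  norm_num

lemma le_ofReal_sq_of_sqrtE_le {a : ℝ≥0∞} {r : ℝ} (hr : 0 ≤ r) (h : sqrtE a ≤ ENNReal.ofReal r) :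
    a ≤ ENNReal.ofReal (r ^ 2) := by
  rw [← sq_sqrtE a, ENNReal.ofReal_pow hr]
  exact pow_le_pow_left₀ bot_le h 2

lemma sum_le_sum_range_card_of_antitone {t : ℕ → ℝ} (ht : Antitone t) (U : Finset ℕ) :
    ∑ j ∈ U, t j ≤ ∑ j ∈ range #U, t j := by
  induction U using Finset.induction_on_max with
  | empty => simp
  | insert a s hlt ih =>
    have has : a ∉ s := fun h => lt_irrefl a (hlt a h)
    have hcard : #s ≤ a := by
      simpa using card_le_card (fun b hb => mem_range.2 (hlt b hb) : s ⊆ range a)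
    rw [sum_insert has, card_insert_of_notMem has, sum_range_succ, add_comm]
    exact add_le_add ih (ht hcard)

lemma sum_Icc_one_eq_sum_range {M : Type*} [AddCommMonoid M] (f : ℕ → M) (m : ℕ) :
    ∑ i ∈ Icc 1 m, f i = ∑ j ∈ range m, f (j + 1) := by
  rw [range_eq_Ico, sum_Ico_add' f, zero_add, Ico_add_one_right_eq_Icc]

lemma Gsum_le_add_sum_Ioc (g : ℕ → ℝ≥0∞) (k m : ℕ) :
    Gsum g k ≤ Gsum g m + ∑ i ∈ Ioc m k, g i := by
  have hdisj : Disjoint (Icc 1 m) (Ioc m k) :=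
    disjoint_left.2 fun i hi hi' => by simp only [mem_Icc, mem_Ioc] at hi hi'; omega
  rw [Gsum, Gsum, ← sum_union hdisj]
  exact sum_le_sum_of_subset fun i hi => by simp only [mem_union, mem_Icc, mem_Ioc] at hi ⊢; omega

section Sorting

variable {n : ℕ}

lemma spcard_le (x : Evec n) : spcard x ≤ n :=
  (card_filter_le _ _).trans_eq (card_fin n)

lemma sum_sq_filter_eq_zero_le (x w : Evec n) :
    ∑ j ∈ univ.filter (fun j => w j = 0), x j ^ 2 ≤ ‖w - x‖ ^ 2 := by
  rw [EuclideanSpace.real_norm_sq_eq]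
  calc ∑ j ∈ univ.filter (fun j => w j = 0), x j ^ 2
      = ∑ j ∈ univ.filter (fun j => w j = 0), (w - x) j ^ 2 :=
        sum_congr rfl fun j hj => by
          rw [PiLp.sub_apply, (mem_filter.1 hj).2, zero_sub, neg_sq]
    _ ≤ ∑ j, (w - x) j ^ 2 :=
        sum_le_sum_of_subset_of_nonneg (subset_univ _) fun _ _ _ => sq_nonneg _

def absSortPerm (x : Evec n) : Equiv.Perm (Fin n) := Tuple.sort fun i => -|x i|

lemma sortedAbs_succ (x : Evec n) (j : Fin n) :
    sortedAbs x (j + 1) = |x (absSortPerm x j)| := by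
  rw [sortedAbs, dif_pos ⟨by omega, j.isLt⟩]
  rfl

lemma sortedAbs_nonneg (x : Evec n) (i : ℕ) : 0 ≤ sortedAbs x i := by
  unfold sortedAbs
  split <;> positivity

lemma sortedAbs_of_lt (x : Evec n) {i : ℕ} (hi : n < i) : sortedAbs x i = 0 :=
  dif_neg fun h => by omega

lemma antitone_abs_absSortPerm (x : Evec n) : Antitone fun j => |x (absSortPerm x j)| :=
  fun _ _ hab => neg_le_neg_iff.1 (Tuple.monotone_sort (fun i => -|x i|) hab)

lemma antitone_sortedAbs_succ (x : Evec n) : Antitone fun j : ℕ => sortedAbs x (j + 1) := by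
  intro a b hab
  change sortedAbs x (b + 1) ≤ sortedAbs x (a + 1)
  rcases lt_or_ge b n with hb | hb
  · have ha : a < n := by omega
    calc sortedAbs x (b + 1) = |x (absSortPerm x ⟨b, hb⟩)| := sortedAbs_succ x ⟨b, hb⟩
      _ ≤ |x (absSortPerm x ⟨a, ha⟩)| := antitone_abs_absSortPerm x (Fin.mk_le_mk.2 hab)
      _ = sortedAbs x (a + 1) := (sortedAbs_succ x ⟨a, ha⟩).symm
  · rw [sortedAbs_of_lt x (by omega)]
    exact sortedAbs_nonneg x _

lemma sum_Icc_sortedAbs_sq (x : Evec n) : ∑ i ∈ Icc 1 n, sortedAbs x i ^ 2 = ‖x‖ ^ 2 := by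
  rw [sum_Icc_one_eq_sum_range, ← Fin.sum_univ_eq_sum_range (fun j => sortedAbs x (j + 1) ^ 2),
    EuclideanSpace.real_norm_sq_eq, ← Equiv.sum_comp (absSortPerm x) fun i => x i ^ 2]
  simp only [sortedAbs_succ, sq_abs]

lemma sum_sq_le_sum_Icc_sortedAbs_sq (x : Evec n) (T : Finset (Fin n)) :
    ∑ j ∈ T, x j ^ 2 ≤ ∑ i ∈ Icc 1 #T, sortedAbs x i ^ 2 := by
  let e : Fin n ↪ ℕ := (absSortPerm x).symm.toEmbedding.trans Fin.valEmbedding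
  have hanti : Antitone fun j : ℕ => sortedAbs x (j + 1) ^ 2 := fun _ _ hab =>
    pow_le_pow_left₀ (sortedAbs_nonneg x _) (antitone_sortedAbs_succ x hab) 2
  calc ∑ j ∈ T, x j ^ 2 = ∑ j ∈ T.map e, sortedAbs x (j + 1) ^ 2 := by
        rw [sum_map]
        refine sum_congr rfl fun j _ => ?_
        simp [e, sortedAbs_succ]
    _ ≤ ∑ j ∈ range #(T.map e), sortedAbs x (j + 1) ^ 2 :=
        sum_le_sum_range_card_of_antitone hanti _
    _ = ∑ i ∈ Icc 1 #T, sortedAbs x i ^ 2 := by rw [card_map, sum_Icc_one_eq_sum_range]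

lemma sum_Icc_spcard_sortedAbs_sq (x : Evec n) :
    ∑ i ∈ Icc 1 (spcard x), sortedAbs x i ^ 2 = ‖x‖ ^ 2 := by
  refine le_antisymm ?_ ?_
  · exact (sum_le_sum_of_subset_of_nonneg (Icc_subset_Icc_right (spcard_le x))
      fun _ _ _ => sq_nonneg _).trans_eq (sum_Icc_sortedAbs_sq x)
  · calc ‖x‖ ^ 2 = ∑ j ∈ univ.filter (fun j => x j ≠ 0), x j ^ 2 := by
          rw [EuclideanSpace.real_norm_sq_eq, sum_filter_of_ne fun j _ h => by simpa using h]
      _ ≤ _ := sum_sq_le_sum_Icc_sortedAbs_sq x _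

lemma sortedAbs_pos (x : Evec n) {i : ℕ} (hi : 1 ≤ i) (hik : i ≤ spcard x) :
    0 < sortedAbs x i := by
  obtain ⟨j, rfl⟩ : ∃ j, i = j + 1 := ⟨i - 1, by omega⟩
  have hjn : j < n := by have := spcard_le x; omega
  rw [show sortedAbs x (j + 1) = _ from sortedAbs_succ x ⟨j, hjn⟩, abs_pos]
  intro h0
  -- a zero at sorted position `j` forces every nonzero entry to a sorted position before `j`
  have hsupp : spcard x ≤ j := by
    refine (card_le_card_of_injOn (t := Iio ⟨j, hjn⟩) (absSortPerm x).symm (fun i hi => ?_)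
      (absSortPerm x).symm.injective.injOn).trans_eq (Fin.card_Iio _)
    simp only [coe_filter, mem_univ, true_and, Set.mem_ofPred_eq] at hi
    simp only [coe_Iio, Set.mem_Iio]
    by_contra hle
    have := antitone_abs_absSortPerm x (not_lt.1 hle)
    dsimp only at this
    rw [Equiv.apply_symm_apply, h0, abs_zero, abs_nonpos_iff] at this
    exact hi this
  omega

lemma sum_Ioc_sortedAbs_sq_le (x w : Evec n) :
    ∑ i ∈ Ioc (spcard w) (spcard x), sortedAbs x i ^ 2 ≤ ‖w - x‖ ^ 2 := by
  set m := spcard w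
  have htail : ∑ i ∈ Ioc m (spcard x), sortedAbs x i ^ 2 ≤ ∑ i ∈ Ioc m n, sortedAbs x i ^ 2 :=
    sum_le_sum_of_subset_of_nonneg (Ioc_subset_Ioc_right (spcard_le x)) fun _ _ _ => sq_nonneg _
  have hsplit : ∑ i ∈ Icc 1 m, sortedAbs x i ^ 2 + ∑ i ∈ Ioc m n, sortedAbs x i ^ 2 = ‖x‖ ^ 2 := by
    have hIcc : ∀ k, Icc 1 k = Ioc 0 k := Icc_add_one_left_eq_Ioc 0
    rw [← sum_Icc_sortedAbs_sq, hIcc, hIcc, sum_Ioc_consecutive _ (Nat.zero_le m) (spcard_le w)]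
  have htop : ∑ j ∈ univ.filter (fun j => w j ≠ 0), x j ^ 2 ≤ ∑ i ∈ Icc 1 m, sortedAbs x i ^ 2 :=
    sum_sq_le_sum_Icc_sortedAbs_sq x _
  have hnorm := sum_filter_add_sum_filter_not univ (fun j => w j ≠ 0) fun j => x j ^ 2
  simp only [not_not, ← EuclideanSpace.real_norm_sq_eq] at hnorm
  linarith [sum_sq_filter_eq_zero_le x w]

end Sorting

lemma Gsum_spcard_le {n : ℕ} (g : ℕ → ℝ≥0∞) (x w : Evec n)
    (hg : ∀ i ∈ Icc 1 (spcard x), g i ≤ ENNReal.ofReal (sortedAbs x i ^ 2)) :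
    Gsum g (spcard x) ≤ Gsum g (spcard w) + ENNReal.ofReal (‖w - x‖ ^ 2) :=
  calc Gsum g (spcard x) ≤ Gsum g (spcard w) + ∑ i ∈ Ioc (spcard w) (spcard x), g i :=
        Gsum_le_add_sum_Ioc g _ _
    _ ≤ Gsum g (spcard w) +
          ∑ i ∈ Ioc (spcard w) (spcard x), ENNReal.ofReal (sortedAbs x i ^ 2) := by
        gcongr with i hi
        exact hg i (by simp only [mem_Ioc, mem_Icc] at hi ⊢; omega)
    _ = Gsum g (spcard w) +
          ENNReal.ofReal (∑ i ∈ Ioc (spcard w) (spcard x), sortedAbs x i ^ 2) := by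
        rw [ENNReal.ofReal_sum_of_nonneg fun _ _ => sq_nonneg _]
    _ ≤ Gsum g (spcard w) + ENNReal.ofReal (‖w - x‖ ^ 2) := by
        gcongr
        exact sum_Ioc_sortedAbs_sq_le x w

lemma coe_add_inner_le_fobj {n : ℕ} (g : ℕ → ℝ≥0∞) (x w : Evec n)
    (hfin : Gsum g (spcard x) ≠ ⊤)
    (hle : Gsum g (spcard x) ≤ Gsum g (spcard w) + ENNReal.ofReal (‖w - x‖ ^ 2)) :
    (((Gsum g (spcard x)).toReal + ‖x‖ ^ 2 + ⟪w - x, (2 : ℝ) • x⟫ : ℝ) : EReal) ≤ fobj g w := by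
  rcases eq_or_ne (Gsum g (spcard w)) ⊤ with htop | hw
  · rw [fobj, htop, EReal.coe_ennreal_top, EReal.top_add_coe]
    exact le_top
  rw [fobj, ← EReal.coe_ennreal_toReal hw, ← EReal.coe_add, EReal.coe_le_coe_iff]
  have hle' := (ENNReal.toReal_le_toReal hfin (by finiteness)).2 hle
  rw [ENNReal.toReal_add hw ENNReal.ofReal_ne_top, ENNReal.toReal_ofReal (sq_nonneg _)] at hle'
  rw [inner_smul_right, inner_sub_left, real_inner_self_eq_norm_sq]
  linarith [norm_sub_sq_real w x]

theorem envelope_tightness_general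
    {n : ℕ} (g : ℕ → ℝ≥0∞)
    (x : Evec n) (k : ℕ) (hk : spcard x = k)
    (hx : ∀ i, ¬(0 < sortedAbs x i ∧ ENNReal.ofReal (sortedAbs x i) < sqrtE (g i))) :
    fbiconj g x = fobj g x ∧
    fobj g x = ∑ i ∈ Finset.Icc 1 k,
      (((g i : ℝ≥0∞) : EReal) + (((sortedAbs x i) ^ 2 : ℝ) : EReal)) := by
  subst hk
  have hg : ∀ i ∈ Icc 1 (spcard x), g i ≤ ENNReal.ofReal (sortedAbs x i ^ 2) := fun i hi =>
    le_ofReal_sq_of_sqrtE_le (sortedAbs_nonneg x i) <| not_lt.1 fun hlt =>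
      hx i ⟨sortedAbs_pos x (mem_Icc.1 hi).1 (mem_Icc.1 hi).2, hlt⟩
  have hfin : Gsum g (spcard x) ≠ ⊤ :=
    ENNReal.sum_ne_top.2 fun i hi => ne_top_of_le_ne_top ENNReal.ofReal_ne_top (hg i hi)
  have hfx : fobj g x = (((Gsum g (spcard x)).toReal + ‖x‖ ^ 2 : ℝ) : EReal) := by
    rw [fobj, EReal.coe_add, EReal.coe_ennreal_toReal hfin]
  refine ⟨?_, ?_⟩
  · rw [fbiconj_eq_fenchelConjugate_fenchelConjugate]
    exact fenchelConjugate_fenchelConjugate_eq_of_affine_minorant hfx fun w =>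
      coe_add_inner_le_fobj g x w hfin (Gsum_spcard_le g x w hg)
  · rw [sum_add_distrib, ← EReal.coe_ennreal_finset_sum, ← EReal.coe_finset_sum,
      sum_Icc_spcard_sortedAbs_sq, fobj, Gsum]

/-- If `card(x) = k` and no sorted magnitude `x̃_i` lies in
`(0, √g_i)`, then the convex envelope is tight at `x`:
`f**(x) = f(x) = Σ_{i=1}^k (g_i + x̃_i²)`. -/
theorem envelope_tightness
    {n : ℕ} (g : ℕ → ℝ≥0∞) (hg0 : g 0 = 0) (hgmono : Monotone g)
    (x : Evec n) (k : ℕ) (hk : spcard x = k)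
    (hx : ∀ i, ¬(0 < sortedAbs x i ∧ ENNReal.ofReal (sortedAbs x i) < sqrtE (g i))) :
    fbiconj g x = fobj g x ∧
    fobj g x = ∑ i ∈ Finset.Icc 1 k,
      (((g i : ℝ≥0∞) : EReal) + (((sortedAbs x i) ^ 2 : ℝ) : EReal)) :=
  envelope_tightness_general g x k hk hx
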